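/- Let q = 2 and π = x² + x + 1 ∈ F_2[x], and let α ∈ K_∞ satisfy α² + α + 1 = 0. Then α ∈ O_∞ and α is (−1)-approximable: there exists a sequence f_n/g_n with f_n, g_n ∈ A, g_n ≠ 0, f_nA + g_nA = A, |α − f_n/g_n| < 2/|g_n|² for all n, and f_n/g_n → α. (First assertion of Example 8.4 of the paper, which identifies explicit badly approximable quadratic irrationals.) -/

import Mathlib

open Filter Polynomial MeasureTheory IsDedekindDomain
open scoped Multiplicative WithZero

/-- The real absolute value attached to a `ℤₘ₀`-valued valuation with base `q`:
`Multiplicative.ofAdd n ↦ q ^ n` and `0 ↦ 0`. -/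
noncomputable def zabs (q : ℕ) (x : ℤᵐ⁰) : ℝ :=
  if hx : x = 0 then 0 else (q : ℝ) ^ Multiplicative.toAdd (WithZero.unzero hx)

variable (Fq : Type) [Field Fq] [Fintype Fq]

/-- The height-one prime `(π)` of `F_q[x]` attached to an irreducible polynomial `π`. -/
noncomputable def piPrime (π : Polynomial Fq) (hirr : Irreducible π) :
    HeightOneSpectrum (Polynomial Fq) where
  asIdeal := Ideal.span {π}
  isPrime := (Ideal.span_singleton_prime hirr.ne_zero).mpr hirr.prime
  ne_bot := by
    simp only [ne_eq, Ideal.span_singleton_eq_bot]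
    exact hirr.ne_zero

/-- The completion `K_∞` of `K = F_q(x)` with respect to the `π`-adic valuation `ν`
(normalized by `ν π = 1`). -/
noncomputable abbrev Kinf (π : Polynomial Fq) (hirr : Irreducible π) : Type :=
  (piPrime Fq π hirr).adicCompletion (RatFunc Fq)

/-- The absolute value `|h| = q ^ (-ν h)` on `K_∞`. -/
noncomputable def absKinf (q : ℕ) (π : Polynomial Fq) (hirr : Irreducible π)
    (h : Kinf Fq π hirr) : ℝ :=
  zabs q (Valued.v h)

/-- The inclusion `K = F_q(x) → K_∞`. -/
noncomputable def toKinf (π : Polynomial Fq) (hirr : Irreducible π) (r : RatFunc Fq) :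
    Kinf Fq π hirr := r

/-- The ring `A` of rational functions regular away from the closed point defined by `π`:
the `F_q`-subalgebra of `F_q(x)` generated by `1/π`, `x/π` and `x²/π`. -/
noncomputable def ringA (π : Polynomial Fq) : Subalgebra Fq (RatFunc Fq) :=
  Algebra.adjoin Fq
    {(algebraMap (Polynomial Fq) (RatFunc Fq) π)⁻¹,
      algebraMap (Polynomial Fq) (RatFunc Fq) X / algebraMap (Polynomial Fq) (RatFunc Fq) π,
      algebraMap (Polynomial Fq) (RatFunc Fq) (X ^ 2) / algebraMap (Polynomial Fq) (RatFunc Fq) π}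

/-- `f/g` is an `M`-approximation of `α ∈ K_∞`: `f, g ∈ A`, `g ≠ 0`, `fA + gA = A` and
`|α - f/g| < q^(-M)/|g|²`. -/
def IsApproxA (q : ℕ) (π : Polynomial Fq) (hirr : Irreducible π) (M : ℤ)
    (α : Kinf Fq π hirr) (f g : ringA Fq π) : Prop :=
  g ≠ 0 ∧ Ideal.span {f, g} = (⊤ : Ideal (ringA Fq π)) ∧
    absKinf Fq q π hirr
        (α - toKinf Fq π hirr (f : RatFunc Fq) / toKinf Fq π hirr (g : RatFunc Fq)) <
      (q : ℝ) ^ (-M) / absKinf Fq q π hirr (toKinf Fq π hirr (g : RatFunc Fq)) ^ 2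

/-- `π = x² + x + 1` over `F₂`. -/
noncomputable def piPoly : Polynomial (ZMod 2) := X ^ 2 + X + 1

lemma piPoly_monic : (piPoly).Monic := by
  unfold piPoly; monicity!

lemma piPoly_natDegree : (piPoly).natDegree = 2 := by
  unfold piPoly; compute_degree!

lemma piPoly_irreducible : Irreducible piPoly := by
  by_contra h
  rcases (piPoly_monic.not_irreducible_iff_exists_add_mul_eq_coeff piPoly_natDegree).mp h with
    ⟨c₁, c₂, h0, h1⟩
  have e0 : (piPoly).coeff 0 = 1 := by
    simp [piPoly, coeff_one, coeff_X]
  have e1 : (piPoly).coeff 1 = 1 := by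
    simp [piPoly, coeff_one, coeff_X]
  rw [e0] at h0
  rw [e1] at h1
  revert h0 h1
  revert c₁ c₂
  decide


/-!
In characteristic 2 a root `α` of `y² + y + 1` satisfies `α - (b² + 1) = (α - b)²`, so the
iterates `P₀ = x + c`, `Pₖ₊₁ = Pₖ² + 1` square the distance to `α` at every step. Since
`(α - x)(α - (x + 1)) = π`, one of the two choices of `c` starts at distance `≤ |π| = 1/2`,
whence `|α - Pₖ| ≤ 2^(-2^k)`. As `deg Pₙ₊₁ = 2^(n+1)`, the fraction `Pₙ₊₁ = f/g` with
`f = Pₙ₊₁/π^(2^n)`, `g = π^(-2^n)` has numerator and denominator in `A`, and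
`|g|² |α - f/g| ≤ 1 < 2`. Dividing `π^(2^(n+1))` by `Pₙ₊₁` gives a Bézout relation in `A`
between `f` and `g`.
-/

open WithZero

section CharTwo

variable {R : Type*} [CommRing R] [CharP R 2] {α : R}

theorem sub_sq_add_one_of_root (hα : α ^ 2 + α + 1 = 0) (b : R) :
    α - (b ^ 2 + 1) = (α - b) ^ 2 := by
  linear_combination -hα + (α + α * b - b ^ 2) * CharTwo.two_eq_zero (R := R)

theorem sub_iterate_sq_add_one_of_root (hα : α ^ 2 + α + 1 = 0) (b : R) (k : ℕ) :
    α - (fun y => y ^ 2 + 1)^[k] b = (α - b) ^ 2 ^ k := by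
  induction k with
  | zero => simp
  | succ k ih =>
    rw [Function.iterate_succ_apply', sub_sq_add_one_of_root hα, ih, ← pow_mul, pow_succ]

theorem sub_mul_sub_add_one_of_root (hα : α ^ 2 + α + 1 = 0) (a : R) :
    (α - a) * (α - (a + 1)) = a ^ 2 + a + 1 := by
  linear_combination hα - (α + a * α + 1) * CharTwo.two_eq_zero (R := R)

end CharTwo

theorem RingHom.map_iterate_sq_add_one {R S : Type*} [Semiring R] [Semiring S] (φ : R →+* S)
    (b : R) (k : ℕ) : φ ((fun y => y ^ 2 + 1)^[k] b) = (fun y => y ^ 2 + 1)^[k] (φ b) :=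
  (Function.Semiconj.iterate_right (fun y => by simp) k).eq b

theorem WithZero.lt_one_iff_le_exp_neg_one {x : ℤᵐ⁰} : x < 1 ↔ x ≤ exp (-1) := by
  rw [← lt_mul_exp_iff_le exp_ne_zero, ← exp_add, neg_add_cancel, exp_zero]

theorem WithZero.pow_two_mul_mul_exp_sq_lt_exp_one {x : ℤᵐ⁰} (hx : x ≤ exp (-1)) (m : ℕ) :
    x ^ (2 * m) * exp (m : ℤ) ^ 2 < exp 1 :=
  calc x ^ (2 * m) * exp (m : ℤ) ^ 2 ≤ exp (-1) ^ (2 * m) * exp (m : ℤ) ^ 2 := by gcongr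
    _ = 1 := by
      simp only [← exp_nsmul, ← exp_add, exp_eq_one]
      ring
    _ < exp 1 := by
      rw [← exp_zero, exp_lt_exp]
      exact one_pos

theorem Valuation.sub_le_exp_neg_one_or_of_root {R : Type*} [CommRing R] [CharP R 2]
    (v : Valuation R ℤᵐ⁰) {α : R} (hα : α ^ 2 + α + 1 = 0) {a : R} (ha : v (a ^ 2 + a + 1) < 1) :
    v (α - a) ≤ exp (-1) ∨ v (α - (a + 1)) ≤ exp (-1) := by
  rw [← sub_mul_sub_add_one_of_root hα, map_mul] at ha
  simp only [← lt_one_iff_le_exp_neg_one]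
  by_contra! h
  exact ha.not_ge (one_le_mul h.1 h.2)

namespace Polynomial

variable {R : Type*} [CommSemiring R] [Nontrivial R]

theorem Monic.sq_add_one {p : R[X]} (hp : p.Monic) (hdeg : 0 < p.natDegree) :
    (p ^ 2 + 1).Monic ∧ (p ^ 2 + 1).natDegree = 2 * p.natDegree := by
  have hsq : (p ^ 2).natDegree = 2 * p.natDegree := by rw [hp.natDegree_pow, mul_comm]
  have hlt : (1 : R[X]).degree < (p ^ 2).degree := by
    rw [degree_one, ← natDegree_pos_iff_degree_pos, hsq]
    positivity
  exact ⟨(hp.pow 2).add_of_left hlt, by rw [natDegree_add_eq_left_of_degree_lt hlt, hsq]⟩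

theorem Monic.iterate_sq_add_one {p : R[X]} (hp : p.Monic) (hdeg : 0 < p.natDegree) (k : ℕ) :
    ((fun q => q ^ 2 + 1)^[k] p).Monic ∧
      ((fun q => q ^ 2 + 1)^[k] p).natDegree = 2 ^ k * p.natDegree := by
  induction k with
  | zero => simp [hp]
  | succ k ih =>
    obtain ⟨hmonic, hnat⟩ := ih
    have hstep := hmonic.sq_add_one (by rw [hnat]; positivity)
    rw [Function.iterate_succ_apply', hstep.2, hnat]
    exact ⟨hstep.1, by ring⟩

end Polynomial

section RingA

variable {Fq : Type} [Field Fq] (π : Fq[X])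

theorem algebraMap_X_pow_div_pow_mem_ringA {k m : ℕ} (h : k ≤ 2 * m) :
    algebraMap Fq[X] (RatFunc Fq) (X ^ k) / algebraMap Fq[X] (RatFunc Fq) π ^ m ∈ ringA Fq π := by
  set P := algebraMap Fq[X] (RatFunc Fq) π
  have inv_mem : P⁻¹ ∈ ringA Fq π := Algebra.subset_adjoin (by simp [P])
  have X_mem : algebraMap Fq[X] (RatFunc Fq) X / P ∈ ringA Fq π :=
    Algebra.subset_adjoin (by simp [P])
  have X_sq_mem : algebraMap Fq[X] (RatFunc Fq) (X ^ 2) / P ∈ ringA Fq π :=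
    Algebra.subset_adjoin (by simp [P])
  induction m generalizing k with
  | zero =>
    obtain rfl : k = 0 := by omega
    simp
  | succ m ih =>
    match k, h with
    | 0, _ => simpa [inv_pow] using pow_mem inv_mem (m + 1)
    | 1, _ =>
      convert mul_mem X_mem (pow_mem inv_mem m) using 1
      rw [pow_one, inv_pow, ← div_eq_mul_inv, div_div, ← pow_succ']
    | k + 2, h =>
      convert mul_mem X_sq_mem (ih (k := k) (by omega)) using 1
      rw [div_mul_div_comm, ← map_mul, ← pow_add, add_comm 2 k, ← pow_succ']

theorem algebraMap_div_pow_mem_ringA {p : Fq[X]} {m : ℕ} (h : p.natDegree ≤ 2 * m) :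
    algebraMap Fq[X] (RatFunc Fq) p / algebraMap Fq[X] (RatFunc Fq) π ^ m ∈ ringA Fq π := by
  rw [p.as_sum_range_C_mul_X_pow, map_sum, Finset.sum_div]
  refine sum_mem fun i hi => ?_
  rw [map_mul, RatFunc.algebraMap_C, ← RatFunc.algebraMap_eq_C, mul_div_assoc, ← Algebra.smul_def]
  exact Subalgebra.smul_mem _
    (algebraMap_X_pow_div_pow_mem_ringA π ((Finset.mem_range_succ_iff.mp hi).trans h)) _

noncomputable def ringA.divPow {p : Fq[X]} {m : ℕ} (h : p.natDegree ≤ 2 * m) : ringA Fq π :=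
  ⟨_, algebraMap_div_pow_mem_ringA π h⟩

noncomputable def ringA.invPow (m : ℕ) : ringA Fq π :=
  ⟨(algebraMap Fq[X] (RatFunc Fq) π ^ m)⁻¹, by
    simpa using algebraMap_div_pow_mem_ringA π (p := 1) (m := m) (by simp)⟩

variable {π}

theorem ringA.invPow_ne_zero (hπ : π ≠ 0) (m : ℕ) : ringA.invPow π m ≠ 0 := by
  simp [ringA.invPow, Subtype.ext_iff, hπ]

theorem ringA.divPow_div_invPow (hπ : π ≠ 0) {p : Fq[X]} {m : ℕ} (h : p.natDegree ≤ 2 * m) :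
    (ringA.divPow π h : RatFunc Fq) / ringA.invPow π m = algebraMap Fq[X] (RatFunc Fq) p := by
  simp [ringA.divPow, ringA.invPow, hπ]

theorem ringA.span_divPow_invPow_eq_top (hπ : π ≠ 0) (hπdeg : π.natDegree ≤ 2) {p : Fq[X]}
    (hp : p.Monic) {m : ℕ} (hpm : p.natDegree = 2 * m) :
    Ideal.span {ringA.divPow π hpm.le, ringA.invPow π m} = ⊤ := by
  have hs : (π ^ (2 * m) /ₘ p).natDegree ≤ 2 * m := by
    rw [natDegree_divByMonic _ hp, natDegree_pow, hpm]
    have := Nat.mul_le_mul_left (2 * m) hπdeg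
    omega
  have ht : (π ^ (2 * m) %ₘ p).natDegree ≤ 2 * m := (natDegree_modByMonic_le _ hp).trans hpm.le
  have hdiv := congrArg (algebraMap Fq[X] (RatFunc Fq)) (modByMonic_add_div (π ^ (2 * m)) p)
  rw [Ideal.eq_top_iff_one, Ideal.mem_span_pair]
  refine ⟨ringA.divPow π hs, ringA.divPow π ht, Subtype.ext ?_⟩
  simp only [map_add, map_mul, map_pow] at hdiv
  simp only [ringA.divPow, ringA.invPow, Subalgebra.coe_add, Subalgebra.coe_mul,
    Subalgebra.coe_one]
  have hP : algebraMap Fq[X] (RatFunc Fq) π ≠ 0 := by simpa using hπ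
  field_simp
  linear_combination hdiv

end RingA

theorem zabs_eq_toNNReal {q : ℕ} (hq : q ≠ 0) (x : ℤᵐ⁰) :
    zabs q x = WithZeroMulInt.toNNReal (e := (q : NNReal)) (by exact_mod_cast hq) x := by
  unfold zabs
  split_ifs with hx
  · simp [hx]
  · rw [WithZeroMulInt.toNNReal_neg_apply _ hx]
    push_cast
    rfl

theorem zabs_le_one_iff {q : ℕ} (hq : 1 < q) {x : ℤᵐ⁰} : zabs q x ≤ 1 ↔ x ≤ 1 := by
  rw [zabs_eq_toNNReal (by omega), NNReal.coe_le_one,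
    WithZeroMulInt.toNNReal_le_one_iff (by exact_mod_cast hq)]

theorem zabs_lt_zpow_div_sq_iff {q : ℕ} (hq : 1 < q) {x y : ℤᵐ⁰} (hy : y ≠ 0) (M : ℤ) :
    zabs q x < (q : ℝ) ^ (-M) / zabs q y ^ 2 ↔ x * y ^ 2 < exp (-M) := by
  have hq' : (1 : NNReal) < q := by exact_mod_cast hq
  have hexp : zabs q (exp (-M)) = (q : ℝ) ^ (-M) := by
    rw [zabs, dif_neg exp_ne_zero]
    simp [toAdd_unzero_eq_log]
  simp only [← hexp, zabs_eq_toNNReal (by omega : q ≠ 0)]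
  rw [lt_div_iff₀ (pow_pos (NNReal.coe_pos.mpr (WithZeroMulInt.toNNReal_pos hq'.ne_bot hy)) 2)]
  rw [← NNReal.coe_pow, ← NNReal.coe_mul, NNReal.coe_lt_coe, ← map_pow, ← map_mul]
  exact (WithZeroMulInt.toNNReal_strictMono hq').lt_iff_lt

section Completion

variable {Fq : Type} [Field Fq] {π : Fq[X]} (hirr : Irreducible π)

theorem toKinf_apply (r : RatFunc Fq) :
    toKinf Fq π hirr r = algebraMap (RatFunc Fq) (Kinf Fq π hirr) r :=
  rfl

theorem valued_v_toKinf (r : RatFunc Fq) :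
    Valued.v (toKinf Fq π hirr r) = (piPrime Fq π hirr).valuation (RatFunc Fq) r :=
  HeightOneSpectrum.valuedAdicCompletion_eq_valuation' (piPrime Fq π hirr) r

theorem valued_v_toKinf_algebraMap_self :
    Valued.v (toKinf Fq π hirr (algebraMap Fq[X] (RatFunc Fq) π)) = exp (-1) := by
  rw [valued_v_toKinf, HeightOneSpectrum.valuation_of_algebraMap]
  exact HeightOneSpectrum.intValuation_singleton _ hirr.ne_zero rfl

theorem valued_v_toKinf_algebraMap_le_one (p : Fq[X]) :
    Valued.v (toKinf Fq π hirr (algebraMap Fq[X] (RatFunc Fq) p)) ≤ 1 := by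
  rw [valued_v_toKinf]
  exact HeightOneSpectrum.valuation_le_one _ p

theorem valued_v_toKinf_invPow (m : ℕ) :
    Valued.v (toKinf Fq π hirr (ringA.invPow π m)) = exp (m : ℤ) := by
  rw [ringA.invPow, valued_v_toKinf, map_inv₀, map_pow, ← valued_v_toKinf,
    valued_v_toKinf_algebraMap_self]
  simp

theorem toKinf_divPow_div_invPow {p : Fq[X]} {m : ℕ} (h : p.natDegree ≤ 2 * m) :
    toKinf Fq π hirr (ringA.divPow π h) / toKinf Fq π hirr (ringA.invPow π m) =
      toKinf Fq π hirr (algebraMap Fq[X] (RatFunc Fq) p) := by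
  rw [← ringA.divPow_div_invPow hirr.ne_zero h, toKinf_apply, toKinf_apply, toKinf_apply,
    map_div₀]

theorem isApproxA_iff {q : ℕ} (hq : 1 < q) {M : ℤ} {α : Kinf Fq π hirr} {f g : ringA Fq π} :
    IsApproxA Fq q π hirr M α f g ↔ g ≠ 0 ∧ Ideal.span {f, g} = ⊤ ∧
      Valued.v (α - toKinf Fq π hirr f / toKinf Fq π hirr g) *
        Valued.v (toKinf Fq π hirr g) ^ 2 < exp (-M) := by
  refine and_congr_right fun hg => and_congr_right fun _ => zabs_lt_zpow_div_sq_iff hq ?_ M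
  rw [Ne, Valuation.zero_iff, toKinf_apply, map_eq_zero]
  exact fun h => hg (Subtype.ext h)

end Completion

local notation "K∞" => Kinf (ZMod 2) piPoly piPoly_irreducible

local notation "φ" => toKinf (ZMod 2) piPoly piPoly_irreducible

local notation "ι" => algebraMap (ZMod 2)[X] (RatFunc (ZMod 2))

instance instCharPKinfTwo : CharP K∞ 2 :=
  charP_of_injective_algebraMap (algebraMap (ZMod 2) K∞).injective 2

noncomputable def approxPoly (c : ZMod 2) (k : ℕ) : (ZMod 2)[X] :=
  (fun p => p ^ 2 + 1)^[k] (X + C c)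

theorem approxPoly_monic (c : ZMod 2) (k : ℕ) : (approxPoly c k).Monic :=
  ((monic_X_add_C c).iterate_sq_add_one (by simp) k).1

theorem approxPoly_natDegree (c : ZMod 2) (k : ℕ) : (approxPoly c k).natDegree = 2 ^ k := by
  rw [approxPoly, ((monic_X_add_C c).iterate_sq_add_one (by simp) k).2, natDegree_X_add_C,
    mul_one]

theorem sub_toKinf_approxPoly {α : K∞} (hα : α ^ 2 + α + 1 = 0) (c : ZMod 2) (k : ℕ) :
    α - φ (ι (approxPoly c k)) = (α - φ (ι (X + C c))) ^ 2 ^ k := by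
  rw [← sub_iterate_sq_add_one_of_root hα]
  exact congrArg (α - ·)
    (((algebraMap (RatFunc (ZMod 2)) K∞).comp ι).map_iterate_sq_add_one (X + C c) k)

theorem exists_valued_v_sub_toKinf_X_add_C_le_exp_neg_one {α : K∞} (hα : α ^ 2 + α + 1 = 0) :
    ∃ c : ZMod 2, Valued.v (α - φ (ι (X + C c))) ≤ exp (-1) := by
  set a := φ (ι X)
  have ha : Valued.v (a ^ 2 + a + 1) < 1 := by
    have : a ^ 2 + a + 1 = φ (ι piPoly) := by
      rw [toKinf_apply, show ι piPoly = ι X ^ 2 + ι X + 1 by simp [piPoly]]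
      simp [a, toKinf_apply]
    rw [this, valued_v_toKinf_algebraMap_self, lt_one_iff_le_exp_neg_one]
  rcases Valued.v.sub_le_exp_neg_one_or_of_root hα ha with h | h
  · exact ⟨0, by simpa [a] using h⟩
  · exact ⟨1, by simpa [a, toKinf_apply] using h⟩

/-- Example 8.4, first assertion: for `q = 2`, `π = x² + x + 1`, any
`α ∈ K_∞` with `α² + α + 1 = 0` lies in `O_∞` and is `(-1)`-approximable, i.e. it is the
limit of a sequence of fractions `f_n/g_n` with `f_n, g_n ∈ A`, `g_n ≠ 0`,
`f_nA + g_nA = A` and `|α - f_n/g_n| < 2/|g_n|²`. -/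
theorem quadratic_root_neg_one_approximable
    (α : Kinf (ZMod 2) piPoly piPoly_irreducible) (hα : α ^ 2 + α + 1 = 0) :
    absKinf (ZMod 2) 2 piPoly piPoly_irreducible α ≤ 1 ∧
      ∃ f g : ℕ → ringA (ZMod 2) piPoly,
        (∀ n, IsApproxA (ZMod 2) 2 piPoly piPoly_irreducible (-1) α (f n) (g n)) ∧
        Tendsto
          (fun n => toKinf (ZMod 2) piPoly piPoly_irreducible ((f n : RatFunc (ZMod 2))) /
            toKinf (ZMod 2) piPoly piPoly_irreducible ((g n : RatFunc (ZMod 2))))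
          atTop (nhds α) := by
  obtain ⟨c, hc⟩ := exists_valued_v_sub_toKinf_X_add_C_le_exp_neg_one hα
  set e := α - φ (ι (X + C c))
  have hdeg n : (approxPoly c (n + 1)).natDegree = 2 * 2 ^ n := by
    rw [approxPoly_natDegree, pow_succ']
  have hquot n : φ (ringA.divPow piPoly (hdeg n).le) / φ (ringA.invPow piPoly (2 ^ n)) =
      α - e ^ 2 ^ (n + 1) := by
    rw [toKinf_divPow_div_invPow, ← sub_toKinf_approxPoly hα, sub_sub_cancel]
  refine ⟨?_, fun n => ringA.divPow piPoly (hdeg n).le, fun n => ringA.invPow piPoly (2 ^ n),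
    fun n => ?_, ?_⟩
  · rw [absKinf, zabs_le_one_iff one_lt_two, ← sub_add_cancel α (φ (ι (X + C c)))]
    exact (Valuation.map_add _ _ _).trans
      (max_le (hc.trans (lt_one_iff_le_exp_neg_one.mpr le_rfl).le)
        (valued_v_toKinf_algebraMap_le_one _ _))
  · rw [isApproxA_iff _ one_lt_two, hquot, sub_sub_cancel, valued_v_toKinf_invPow, map_pow]
    refine ⟨ringA.invPow_ne_zero piPoly_irreducible.ne_zero _,
      ringA.span_divPow_invPow_eq_top piPoly_irreducible.ne_zero piPoly_natDegree.le
        (approxPoly_monic c _) (hdeg n), ?_⟩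
    rw [pow_succ' (2 : ℕ) n, neg_neg]
    exact pow_two_mul_mul_exp_sq_lt_exp_one hc _
  · have hpow : Tendsto (fun n : ℕ => e ^ 2 ^ (n + 1)) atTop (nhds 0) :=
      (Valued.tendsto_zero_pow_of_le_exp_neg_one hc).comp
        ((tendsto_pow_atTop_atTop_of_one_lt one_lt_two).comp (tendsto_add_atTop_nat 1))
    simpa only [hquot, sub_zero] using tendsto_const_nhds.sub hpow
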